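/- arXiv:2508.16082 — 2 statements merged into one kernel-verified Lean document; each statement's English description precedes it below -/
import Mathlib

section
/- Let p ∈ ℝ^n be a probability vector, i.e., p_i ≥ 0 for all i and Σ_{i=1}^n p_i = 1. Then for every x ∈ ℝ^n with ‖x‖₂ = 1, it holds that Σ_{i=1}^n p_i x_i² − (Σ_{i=1}^n p_i x_i)² ≤ 1/2. Equivalently, the operator norm of the positive semidefinite matrix diag(p) − p p^T is at most 1/2. -/
/-!
The quadratic form of `diag(p) - p pᵀ` at `x` is the variance of `x` under the weights `p`.
By Popoviciu's inequality it is at most `(max x - min x)² / 4 ≤ ‖x‖² / 2`. The matrix is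
symmetric and its quadratic form is nonnegative, so its operator norm is the supremum of its
Rayleigh quotient, which is then at most `1 / 2` as well.
-/

open Finset Matrix

section WeightedVariance

variable {ι : Type*} [Fintype ι] {p : ι → ℝ}

theorem weighted_variance_eq_sum_sub_sq (hsum : ∑ i, p i = 1) (x : ι → ℝ) (c : ℝ) :
    ∑ i, p i * x i ^ 2 - (∑ i, p i * x i) ^ 2 =
      ∑ i, p i * (x i - c) ^ 2 - (∑ i, p i * x i - c) ^ 2 := by
  have h : ∑ i, p i * (x i - c) ^ 2 =
      ∑ i, p i * x i ^ 2 - 2 * c * ∑ i, p i * x i + c ^ 2 * ∑ i, p i := by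
    simp only [mul_sum, ← sum_sub_distrib, ← sum_add_distrib]
    exact sum_congr rfl fun i _ => by ring
  rw [h, hsum]
  ring

theorem weighted_variance_nonneg (hp : ∀ i, 0 ≤ p i) (hsum : ∑ i, p i = 1) (x : ι → ℝ) :
    0 ≤ ∑ i, p i * x i ^ 2 - (∑ i, p i * x i) ^ 2 := by
  rw [weighted_variance_eq_sum_sub_sq hsum x (∑ i, p i * x i), sub_self, sq, mul_zero, sub_zero]
  exact sum_nonneg fun i _ => mul_nonneg (hp i) (sq_nonneg _)

theorem weighted_variance_le_sq_sub_div_four (hp : ∀ i, 0 ≤ p i) (hsum : ∑ i, p i = 1)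
    {x : ι → ℝ} {m M : ℝ} (hx : ∀ i, x i ∈ Set.Icc m M) :
    ∑ i, p i * x i ^ 2 - (∑ i, p i * x i) ^ 2 ≤ (M - m) ^ 2 / 4 := by
  have hdev : ∀ i, (x i - (m + M) / 2) ^ 2 ≤ (M - m) ^ 2 / 4 := fun i => by
    obtain ⟨hm, hM⟩ := hx i
    nlinarith
  calc ∑ i, p i * x i ^ 2 - (∑ i, p i * x i) ^ 2
      ≤ ∑ i, p i * (x i - (m + M) / 2) ^ 2 := by
        rw [weighted_variance_eq_sum_sub_sq hsum x ((m + M) / 2)]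
        linarith [sq_nonneg (∑ i, p i * x i - (m + M) / 2)]
    _ ≤ ∑ i, p i * ((M - m) ^ 2 / 4) := by gcongr with i; exacts [hp i, hdev i]
    _ = (M - m) ^ 2 / 4 := by rw [← sum_mul, hsum, one_mul]

theorem sq_sub_le_two_mul_sum_sq (x : ι → ℝ) (i j : ι) :
    (x i - x j) ^ 2 ≤ 2 * ∑ k, x k ^ 2 := by
  classical
  obtain rfl | hij := eq_or_ne i j
  · simpa using sum_nonneg fun k _ => sq_nonneg (x k)
  · calc (x i - x j) ^ 2 ≤ 2 * ∑ k ∈ {i, j}, x k ^ 2 := by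
          rw [sum_pair hij]; nlinarith [sq_nonneg (x i + x j)]
      _ ≤ 2 * ∑ k, x k ^ 2 := by
          gcongr 2 * ?_
          exact sum_le_univ_sum_of_nonneg fun k => sq_nonneg (x k)

theorem weighted_variance_le_half_sum_sq (hp : ∀ i, 0 ≤ p i) (hsum : ∑ i, p i = 1)
    (x : ι → ℝ) :
    ∑ i, p i * x i ^ 2 - (∑ i, p i * x i) ^ 2 ≤ (∑ i, x i ^ 2) / 2 := by
  obtain ⟨i₀, -⟩ := nonempty_of_sum_ne_zero (hsum ▸ one_ne_zero : ∑ i, p i ≠ 0)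
  have : Nonempty ι := ⟨i₀⟩
  obtain ⟨iMax, hMax⟩ := Finite.exists_max x
  obtain ⟨iMin, hMin⟩ := Finite.exists_min x
  calc ∑ i, p i * x i ^ 2 - (∑ i, p i * x i) ^ 2
      ≤ (x iMax - x iMin) ^ 2 / 4 :=
        weighted_variance_le_sq_sub_div_four hp hsum fun i => ⟨hMin i, hMax i⟩
    _ ≤ (∑ i, x i ^ 2) / 2 := by linarith [sq_sub_le_two_mul_sum_sq x iMax iMin]

end WeightedVariance

theorem ContinuousLinearMap.opNorm_le_of_abs_re_inner_self_le {𝕜 E : Type*} [RCLike 𝕜]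
    [NormedAddCommGroup E] [InnerProductSpace 𝕜 E] {T : E →L[𝕜] E}
    (hT : (T : E →ₗ[𝕜] E).IsSymmetric) {c : ℝ} (hc : 0 ≤ c)
    (h : ∀ x, |RCLike.re (inner 𝕜 (T x) x)| ≤ c * ‖x‖ ^ 2) : ‖T‖ ≤ c := by
  rw [T.norm_eq_iSup_rayleighQuotient hT]
  refine ciSup_le fun x => ?_
  rw [rayleighQuotient, reApplyInnerSelf_apply, abs_div, abs_sq]
  exact div_le_of_le_mul₀ (sq_nonneg _) hc (h x)

namespace Matrix

variable {ι : Type*} [Fintype ι] [DecidableEq ι]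

theorem isHermitian_diagonal_sub_vecMulVec_self (p : ι → ℝ) :
    (diagonal p - vecMulVec p p).IsHermitian :=
  (isHermitian_diagonal p).sub (posSemidef_vecMulVec_self_star p).isHermitian

theorem inner_toEuclideanLin_diagonal_sub_vecMulVec_self (p : ι → ℝ)
    (x : EuclideanSpace ℝ ι) :
    inner ℝ (toEuclideanLin (diagonal p - vecMulVec p p) x) x =
      ∑ i, p i * x i ^ 2 - (∑ i, p i * x i) ^ 2 := by
  rw [EuclideanSpace.inner_eq_star_dotProduct, ofLp_toLpLin, toLin'_apply, sub_mulVec,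
    star_trivial, dotProduct_sub, vecMulVec_mulVec, op_smul_eq_smul, dotProduct_smul, smul_eq_mul]
  simp only [dotProduct, mulVec_diagonal, mul_left_comm (x _), mul_comm (x _) (p _), sq]

end Matrix

/-- For a probability vector `p`, the quadratic form of `diag(p) − p pᵀ` on unit
vectors is at most `1/2`; equivalently the operator norm of `diag(p) − p pᵀ`
is at most `1/2`. -/
theorem softmax_hessian_bound {n : ℕ} (p : Fin n → ℝ)
    (hp : ∀ i, 0 ≤ p i) (hsum : ∑ i, p i = 1) :
    (∀ x : EuclideanSpace ℝ (Fin n), ‖x‖ = 1 →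
      ∑ i, p i * (x i) ^ 2 - (∑ i, p i * x i) ^ 2 ≤ 1 / 2) ∧
    ‖LinearMap.toContinuousLinearMap
        (Matrix.toEuclideanLin (Matrix.diagonal p - Matrix.vecMulVec p p))‖ ≤ 1 / 2 := by
  have hvar (x : EuclideanSpace ℝ (Fin n)) :
      ∑ i, p i * (x i) ^ 2 - (∑ i, p i * x i) ^ 2 ≤ ‖x‖ ^ 2 / 2 := by
    rw [EuclideanSpace.real_norm_sq_eq]
    exact weighted_variance_le_half_sum_sq hp hsum x
  refine ⟨fun x hx => by simpa [hx] using hvar x, ?_⟩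
  refine ContinuousLinearMap.opNorm_le_of_abs_re_inner_self_le
    (isSymmetric_toEuclideanLin_iff.mpr (isHermitian_diagonal_sub_vecMulVec_self p))
    (by norm_num) fun x => ?_
  rw [LinearMap.coe_toContinuousLinearMap', RCLike.re_to_real,
    inner_toEuclideanLin_diagonal_sub_vecMulVec_self,
    abs_of_nonneg (weighted_variance_nonneg hp hsum x)]
  linarith [hvar x]
end

section
/- Consider a depth-L feed-forward network with activation φ, where φ is differentiable with |φ'(u)| ≤ β_φ and |φ(u)| ≤ β_φ|u| for all u ∈ ℝ. Suppose ‖x‖₂ ≤ M_x, ‖W^(ℓ)‖₂ ≤ s_ℓ for every layer ℓ, and let y be any class label. Then for each layer index r ∈ {1, …, L}, the gradient of the map W^(r) ↦ −log(softmax(f_θ(x))_y) (all other weights held fixed) has norm at most √2 · M_x · β_φ^{L−1} · Π_{ℓ≠r} s_ℓ. -/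
/-! The loss is the cross-entropy composed with the map `W^(r) ↦ f_θ(x)`. The cross-entropy is
`√2`-Lipschitz, since its gradient `softmax z - e_y` has norm at most `√2`. The logits are
Lipschitz in `W^(r)` with constant `M_x β_φ^{L-1} ∏_{ℓ ≠ r} s_ℓ`: every layer `ℓ ≠ r` scales
differences by at most `s_ℓ` and `φ` by at most `β_φ`, while at layer `r` the difference
`(V₁ - V₂) a^(r)` is bounded by the Frobenius norm `‖V₁ - V₂‖` times
`‖a^(r)‖ ≤ M_x β_φ^r ∏_{ℓ < r} s_ℓ`. A Lipschitz constant bounds the norm of the derivative,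
hence of the gradient. -/

noncomputable section

/-- View a vectorized weight `w ∈ ℝ^{m×n}` as a matrix. -/
def toMat {m n : ℕ} (w : EuclideanSpace ℝ (Fin m × Fin n)) : Matrix (Fin m) (Fin n) ℝ :=
  Matrix.of fun i j => w (i, j)

/-- Spectral (ℓ²-operator) norm of a vectorized weight matrix. -/
def specNorm {m n : ℕ} (w : EuclideanSpace ℝ (Fin m × Fin n)) : ℝ :=
  ‖LinearMap.toContinuousLinearMap (Matrix.toEuclideanLin (toMat w))‖

/-- Hidden activations of a feed-forward network:
`a^(0) = x`, `a^(ℓ+1) = φ(W^(ℓ+1) a^(ℓ))` entrywise. -/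
def hiddenW (φ : ℝ → ℝ) (dims : ℕ → ℕ)
    (W : ∀ ℓ : ℕ, EuclideanSpace ℝ (Fin (dims (ℓ + 1)) × Fin (dims ℓ)))
    (x : EuclideanSpace ℝ (Fin (dims 0))) :
    (ℓ : ℕ) → EuclideanSpace ℝ (Fin (dims ℓ))
  | 0 => x
  | ℓ + 1 => WithLp.toLp 2 (fun i => φ (∑ j, W ℓ (i, j) * hiddenW φ dims W x ℓ j))

/-- The logits of a depth-`Lhid + 1` feed-forward network: `z = W^(L) a^(L−1)`. -/
def logitsW (φ : ℝ → ℝ) (dims : ℕ → ℕ) (Lhid : ℕ)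
    (W : ∀ ℓ : ℕ, EuclideanSpace ℝ (Fin (dims (ℓ + 1)) × Fin (dims ℓ)))
    (x : EuclideanSpace ℝ (Fin (dims 0))) :
    EuclideanSpace ℝ (Fin (dims (Lhid + 1))) :=
  WithLp.toLp 2 (fun i => ∑ j, W Lhid (i, j) * hiddenW φ dims W x Lhid j)

/-- Cross-entropy loss of the logits `z` with label `y`: `−log(softmax(z)_y)`. -/
def crossEntropy {K : ℕ} (z : EuclideanSpace ℝ (Fin K)) (y : Fin K) : ℝ :=
  -Real.log (Real.exp (z y) / ∑ k, Real.exp (z k))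

open Real Finset

lemma EuclideanSpace.norm_le_mul_of_forall_abs_le {ι : Type*} [Fintype ι]
    {u v : EuclideanSpace ℝ ι} {c : ℝ} (hc : 0 ≤ c) (h : ∀ i, |u i| ≤ c * |v i|) :
    ‖u‖ ≤ c * ‖v‖ := by
  rw [← sq_le_sq₀ (norm_nonneg u) (by positivity), mul_pow, EuclideanSpace.real_norm_sq_eq,
    EuclideanSpace.real_norm_sq_eq, mul_sum]
  refine sum_le_sum fun i _ => ?_
  rw [← sq_abs (u i), ← sq_abs (v i), ← mul_pow]
  exact pow_le_pow_left₀ (abs_nonneg _) (h i) 2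

section Activation

variable {ι : Type*} [Fintype ι] {φ : ℝ → ℝ} {β : ℝ}

lemma nonneg_of_forall_abs_le_mul_abs (hφ : ∀ t, |φ t| ≤ β * |t|) : 0 ≤ β := by
  simpa using (abs_nonneg _).trans (hφ 1)

lemma norm_toLp_comp_le (hφ : ∀ t, |φ t| ≤ β * |t|) (v : EuclideanSpace ℝ ι) :
    ‖(WithLp.toLp 2 fun i => φ (v i) : EuclideanSpace ℝ ι)‖ ≤ β * ‖v‖ :=
  EuclideanSpace.norm_le_mul_of_forall_abs_le (nonneg_of_forall_abs_le_mul_abs hφ) fun i => hφ (v i)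

lemma norm_toLp_comp_sub_le (hφ : ∀ a b, |φ a - φ b| ≤ β * |a - b|) (u v : EuclideanSpace ℝ ι) :
    ‖(WithLp.toLp 2 fun i => φ (u i) : EuclideanSpace ℝ ι) - WithLp.toLp 2 fun i => φ (v i)‖
      ≤ β * ‖u - v‖ :=
  EuclideanSpace.norm_le_mul_of_forall_abs_le (by simpa using (abs_nonneg _).trans (hφ 1 0))
    fun i => hφ (u i) (v i)

end Activation

section WeightMap

variable {m n : ℕ}

def weightMap (w : EuclideanSpace ℝ (Fin m × Fin n)) :
    EuclideanSpace ℝ (Fin n) →L[ℝ] EuclideanSpace ℝ (Fin m) :=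
  LinearMap.toContinuousLinearMap (Matrix.toEuclideanLin (toMat w))

lemma weightMap_apply (w : EuclideanSpace ℝ (Fin m × Fin n)) (v : EuclideanSpace ℝ (Fin n))
    (i : Fin m) : weightMap w v i = ∑ j, w (i, j) * v j :=
  rfl

lemma weightMap_sub_apply (w₁ w₂ : EuclideanSpace ℝ (Fin m × Fin n))
    (v : EuclideanSpace ℝ (Fin n)) : weightMap (w₁ - w₂) v = weightMap w₁ v - weightMap w₂ v := by
  ext i
  simp [weightMap_apply, sub_mul]

lemma specNorm_nonneg (w : EuclideanSpace ℝ (Fin m × Fin n)) : 0 ≤ specNorm w :=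
  norm_nonneg _

lemma norm_weightMap_apply_le (w : EuclideanSpace ℝ (Fin m × Fin n))
    (v : EuclideanSpace ℝ (Fin n)) : ‖weightMap w v‖ ≤ specNorm w * ‖v‖ :=
  (weightMap w).le_opNorm v

lemma norm_weightMap_apply_le_norm_mul (w : EuclideanSpace ℝ (Fin m × Fin n))
    (v : EuclideanSpace ℝ (Fin n)) : ‖weightMap w v‖ ≤ ‖w‖ * ‖v‖ := by
  rw [← sq_le_sq₀ (norm_nonneg _) (by positivity), mul_pow, EuclideanSpace.real_norm_sq_eq,
    EuclideanSpace.real_norm_sq_eq, EuclideanSpace.real_norm_sq_eq, Fintype.sum_prod_type, sum_mul]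
  exact sum_le_sum fun i _ => by rw [weightMap_apply]; exact sum_mul_sq_le_sq_mul_sq _ _ _

end WeightMap

section Network

variable (φ : ℝ → ℝ) (dims : ℕ → ℕ)
  (W : ∀ ℓ : ℕ, EuclideanSpace ℝ (Fin (dims (ℓ + 1)) × Fin (dims ℓ)))
  (x : EuclideanSpace ℝ (Fin (dims 0)))

def preactW (ℓ : ℕ) : EuclideanSpace ℝ (Fin (dims (ℓ + 1))) :=
  weightMap (W ℓ) (hiddenW φ dims W x ℓ)

lemma hiddenW_succ (ℓ : ℕ) :
    hiddenW φ dims W x (ℓ + 1) = WithLp.toLp 2 fun i => φ (preactW φ dims W x ℓ i) :=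
  rfl

lemma hiddenW_update_of_le {r ℓ : ℕ} (V : EuclideanSpace ℝ (Fin (dims (r + 1)) × Fin (dims r)))
    (h : ℓ ≤ r) : hiddenW φ dims (Function.update W r V) x ℓ = hiddenW φ dims W x ℓ := by
  induction ℓ with
  | zero => rfl
  | succ ℓ ih =>
    simp only [hiddenW_succ, preactW, ih (by omega), Function.update_of_ne (by omega : ℓ ≠ r)]

variable {φ dims W x} {β Mx : ℝ} {s : ℕ → ℝ}

lemma norm_hiddenW_le (hφ : ∀ t, |φ t| ≤ β * |t|) (hx : ‖x‖ ≤ Mx) {ℓ : ℕ}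
    (hW : ∀ j < ℓ, specNorm (W j) ≤ s j) :
    ‖hiddenW φ dims W x ℓ‖ ≤ Mx * β ^ ℓ * ∏ j ∈ range ℓ, s j := by
  induction ℓ with
  | zero => simpa [hiddenW] using hx
  | succ ℓ ih =>
    have hβ := nonneg_of_forall_abs_le_mul_abs hφ
    have hs : 0 ≤ s ℓ := (specNorm_nonneg _).trans (hW ℓ ℓ.lt_add_one)
    calc ‖hiddenW φ dims W x (ℓ + 1)‖ ≤ β * ‖preactW φ dims W x ℓ‖ :=
          norm_toLp_comp_le hφ (preactW φ dims W x ℓ)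
      _ ≤ β * (s ℓ * (Mx * β ^ ℓ * ∏ j ∈ range ℓ, s j)) := by
        gcongr
        exact (norm_weightMap_apply_le _ _).trans
          (mul_le_mul (hW ℓ ℓ.lt_add_one) (ih fun j hj => hW j (by omega)) (norm_nonneg _) hs)
      _ = Mx * β ^ (ℓ + 1) * ∏ j ∈ range (ℓ + 1), s j := by
        rw [prod_range_succ, pow_succ]; ring

variable {r : ℕ} (V₁ V₂ : EuclideanSpace ℝ (Fin (dims (r + 1)) × Fin (dims r)))

lemma norm_preactW_update_sub_le (hφ : ∀ t, |φ t| ≤ β * |t|) (hx : ‖x‖ ≤ Mx) {ℓ : ℕ}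
    (hW : ∀ j ≤ ℓ, specNorm (W j) ≤ s j)
    (hprev : ‖hiddenW φ dims (Function.update W r V₁) x ℓ
        - hiddenW φ dims (Function.update W r V₂) x ℓ‖
      ≤ Mx * β ^ ℓ * (∏ j ∈ (range ℓ).erase r, s j) * ‖V₁ - V₂‖) :
    ‖preactW φ dims (Function.update W r V₁) x ℓ - preactW φ dims (Function.update W r V₂) x ℓ‖
      ≤ Mx * β ^ ℓ * (∏ j ∈ (range (ℓ + 1)).erase r, s j) * ‖V₁ - V₂‖ := by
  rcases eq_or_ne ℓ r with rfl | hℓr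
  · have hpre : ∀ V, preactW φ dims (Function.update W ℓ V) x ℓ
        = weightMap V (hiddenW φ dims W x ℓ) := fun V => by
      simp only [preactW, Function.update_self, hiddenW_update_of_le φ dims W x V le_rfl]
    rw [hpre, hpre, ← weightMap_sub_apply, range_add_one, erase_insert notMem_range_self]
    calc _ ≤ ‖V₁ - V₂‖ * ‖hiddenW φ dims W x ℓ‖ := norm_weightMap_apply_le_norm_mul _ _
      _ ≤ ‖V₁ - V₂‖ * (Mx * β ^ ℓ * ∏ j ∈ range ℓ, s j) := by
        gcongr
        exact norm_hiddenW_le hφ hx fun j hj => hW j hj.le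
      _ = _ := by ring
  · have hpre : ∀ V, preactW φ dims (Function.update W r V) x ℓ
        = weightMap (W ℓ) (hiddenW φ dims (Function.update W r V) x ℓ) :=
      fun V => by simp only [preactW, Function.update_of_ne hℓr]
    rw [hpre, hpre, ← map_sub, range_add_one, erase_insert_of_ne hℓr,
      prod_insert (fun h => notMem_range_self (mem_of_mem_erase h))]
    calc _ ≤ specNorm (W ℓ) * _ := norm_weightMap_apply_le _ _
      _ ≤ s ℓ * (Mx * β ^ ℓ * (∏ j ∈ (range ℓ).erase r, s j) * ‖V₁ - V₂‖) :=
        mul_le_mul (hW ℓ le_rfl) hprev (norm_nonneg _) ((specNorm_nonneg _).trans (hW ℓ le_rfl))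
      _ = _ := by ring

lemma norm_hiddenW_update_sub_le (hφ : ∀ t, |φ t| ≤ β * |t|)
    (hφ_lip : ∀ a b, |φ a - φ b| ≤ β * |a - b|) (hx : ‖x‖ ≤ Mx) {ℓ : ℕ}
    (hW : ∀ j < ℓ, specNorm (W j) ≤ s j) :
    ‖hiddenW φ dims (Function.update W r V₁) x ℓ - hiddenW φ dims (Function.update W r V₂) x ℓ‖
      ≤ Mx * β ^ ℓ * (∏ j ∈ (range ℓ).erase r, s j) * ‖V₁ - V₂‖ := by
  induction ℓ with
  | zero =>
    have hMx : 0 ≤ Mx := (norm_nonneg x).trans hx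
    simp only [hiddenW, sub_self, norm_zero, pow_zero, range_zero, erase_empty, prod_empty]
    positivity
  | succ ℓ ih =>
    have hβ := nonneg_of_forall_abs_le_mul_abs hφ
    calc _ ≤ β * ‖preactW φ dims (Function.update W r V₁) x ℓ
          - preactW φ dims (Function.update W r V₂) x ℓ‖ :=
        norm_toLp_comp_sub_le hφ_lip (preactW φ dims (Function.update W r V₁) x ℓ) _
      _ ≤ β * (Mx * β ^ ℓ * (∏ j ∈ (range (ℓ + 1)).erase r, s j) * ‖V₁ - V₂‖) := by
        gcongr
        exact norm_preactW_update_sub_le V₁ V₂ hφ hx (fun j hj => hW j (by omega))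
          (ih fun j hj => hW j (by omega))
      _ = _ := by rw [pow_succ]; ring

lemma norm_logitsW_update_sub_le (hφ : ∀ t, |φ t| ≤ β * |t|)
    (hφ_lip : ∀ a b, |φ a - φ b| ≤ β * |a - b|) (hx : ‖x‖ ≤ Mx) {L : ℕ}
    (hW : ∀ j ≤ L, specNorm (W j) ≤ s j) :
    ‖logitsW φ dims L (Function.update W r V₁) x - logitsW φ dims L (Function.update W r V₂) x‖
      ≤ Mx * β ^ L * (∏ j ∈ (range (L + 1)).erase r, s j) * ‖V₁ - V₂‖ :=
  norm_preactW_update_sub_le V₁ V₂ hφ hx hW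
    (norm_hiddenW_update_sub_le V₁ V₂ hφ hφ_lip hx fun j hj => hW j hj.le)

end Network

section Softmax

variable {ι : Type*} [Fintype ι]

def softmax (z : EuclideanSpace ℝ ι) : EuclideanSpace ℝ ι :=
  WithLp.toLp 2 fun k => exp (z k) / ∑ j, exp (z j)

lemma softmax_nonneg (z : EuclideanSpace ℝ ι) (k : ι) : 0 ≤ softmax z k := by
  unfold softmax; positivity

lemma sum_softmax [Nonempty ι] (z : EuclideanSpace ℝ ι) : ∑ k, softmax z k = 1 := by
  simp only [softmax, ← sum_div]
  exact div_self (sum_pos (fun k _ => exp_pos _) univ_nonempty).ne'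

lemma norm_softmax_le_one [Nonempty ι] (z : EuclideanSpace ℝ ι) : ‖softmax z‖ ≤ 1 := by
  rw [← sq_le_one_iff₀ (norm_nonneg _), EuclideanSpace.real_norm_sq_eq, ← one_pow 2,
    ← sum_softmax z]
  exact sum_sq_le_sq_sum_of_nonneg fun k _ => softmax_nonneg z k

lemma norm_softmax_sub_single_le [DecidableEq ι] (z : EuclideanSpace ℝ ι) (y : ι) :
    ‖softmax z - EuclideanSpace.single y 1‖ ≤ √2 := by
  have : Nonempty ι := ⟨y⟩
  rw [← sq_le_sq₀ (norm_nonneg _) (sqrt_nonneg _), sq_sqrt zero_le_two, norm_sub_sq_real,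
    EuclideanSpace.inner_single_right, PiLp.norm_single]
  have hp := norm_softmax_le_one z
  have hpy := softmax_nonneg z y
  simp only [one_mul, conj_trivial, norm_one]
  nlinarith [norm_nonneg (softmax z)]

end Softmax

section CrossEntropy

variable {K : ℕ}

lemma crossEntropy_eq_log_sum_exp_sub (z : EuclideanSpace ℝ (Fin K)) (y : Fin K) :
    crossEntropy z y = log (∑ k, exp (z k)) - z y := by
  have hS : 0 < ∑ k, exp (z k) := sum_pos (fun k _ => exp_pos _) ⟨y, mem_univ y⟩
  rw [crossEntropy, log_div (exp_pos _).ne' hS.ne', log_exp]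
  ring

lemma hasFDerivAt_crossEntropy (z : EuclideanSpace ℝ (Fin K)) (y : Fin K) :
    HasFDerivAt (crossEntropy · y)
      (innerSL ℝ (softmax z - EuclideanSpace.single y 1)) z := by
  have hS : 0 < ∑ k, exp (z k) := sum_pos (fun k _ => exp_pos _) ⟨y, mem_univ y⟩
  have hsum : HasFDerivAt (fun w : EuclideanSpace ℝ (Fin K) => ∑ k, exp (w k))
      (∑ k, exp (z k) • EuclideanSpace.proj k) z :=
    HasFDerivAt.fun_sum fun k _ =>
      (hasDerivAt_exp (z k)).comp_hasFDerivAt (f := fun w : EuclideanSpace ℝ (Fin K) => w k) z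
        (EuclideanSpace.proj (𝕜 := ℝ) k).hasFDerivAt
  have hCE := ((hasDerivAt_log hS.ne').comp_hasFDerivAt z hsum).sub
    (EuclideanSpace.proj y : EuclideanSpace ℝ (Fin K) →L[ℝ] ℝ).hasFDerivAt
  have hderiv : (∑ k, exp (z k))⁻¹ • (∑ k, exp (z k) • EuclideanSpace.proj k)
      - EuclideanSpace.proj y = innerSL ℝ (softmax z - EuclideanSpace.single y 1) := by
    ext h
    simp [softmax, PiLp.inner_apply, mul_sum, div_eq_inv_mul]
    exact sum_congr rfl fun k _ => by ring
  rw [funext fun w => crossEntropy_eq_log_sum_exp_sub w y]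
  exact hCE.congr_fderiv hderiv

lemma abs_crossEntropy_sub_le (z₁ z₂ : EuclideanSpace ℝ (Fin K)) (y : Fin K) :
    |crossEntropy z₁ y - crossEntropy z₂ y| ≤ √2 * ‖z₁ - z₂‖ :=
  convex_univ.norm_image_sub_le_of_norm_hasFDerivWithin_le
    (fun z _ => (hasFDerivAt_crossEntropy z y).hasFDerivWithinAt)
    (fun z _ => (innerSL_apply_norm ℝ _).trans_le (norm_softmax_sub_single_le z y))
    (Set.mem_univ z₂) (Set.mem_univ z₁)

end CrossEntropy

theorem layer_gradient_bound_general (φ : ℝ → ℝ) (dims : ℕ → ℕ) (Lhid : ℕ)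
    (W : ∀ ℓ : ℕ, EuclideanSpace ℝ (Fin (dims (ℓ + 1)) × Fin (dims ℓ)))
    (x : EuclideanSpace ℝ (Fin (dims 0))) (y : Fin (dims (Lhid + 1)))
    (βφ Mx : ℝ) (s : ℕ → ℝ)
    (hφ : Differentiable ℝ φ)
    (hφ' : ∀ u : ℝ, |deriv φ u| ≤ βφ)
    (hφ0 : ∀ u : ℝ, |φ u| ≤ βφ * |u|)
    (hx : ‖x‖ ≤ Mx)
    (hW : ∀ ℓ ≤ Lhid, specNorm (W ℓ) ≤ s ℓ)
    (r : ℕ) :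
    ‖gradient
        (fun V : EuclideanSpace ℝ (Fin (dims (r + 1)) × Fin (dims r)) =>
          crossEntropy (logitsW φ dims Lhid (Function.update W r V) x) y) (W r)‖
      ≤ Real.sqrt 2 * Mx * βφ ^ (Lhid + 1 - 1)
          * ∏ ℓ ∈ (Finset.range (Lhid + 1)).erase r, s ℓ := by
  have hφ_lip : ∀ a b, |φ a - φ b| ≤ βφ * |a - b| := fun a b => by
    simpa using convex_univ.norm_image_sub_le_of_norm_deriv_le
      (fun u _ => hφ u) (fun u _ => hφ' u) (Set.mem_univ b) (Set.mem_univ a)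
  have hC : 0 ≤ Mx * βφ ^ Lhid * ∏ ℓ ∈ (range (Lhid + 1)).erase r, s ℓ := by
    have hMx : 0 ≤ Mx := (norm_nonneg x).trans hx
    have hβ := nonneg_of_forall_abs_le_mul_abs hφ0
    have hs : ∀ ℓ ∈ (range (Lhid + 1)).erase r, 0 ≤ s ℓ := fun ℓ hℓ =>
      (specNorm_nonneg _).trans (hW ℓ (by simp at hℓ; omega))
    have := prod_nonneg hs
    positivity
  rw [gradient, LinearIsometryEquiv.norm_map, Nat.add_sub_cancel, mul_assoc √2, mul_assoc √2]
  refine norm_fderiv_le_of_lip' ℝ (by positivity) (Filter.Eventually.of_forall fun V => ?_)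
  calc _ ≤ √2 * ‖logitsW φ dims Lhid (Function.update W r V) x
        - logitsW φ dims Lhid (Function.update W r (W r)) x‖ := abs_crossEntropy_sub_le _ _ y
    _ ≤ √2 * (Mx * βφ ^ Lhid * (∏ ℓ ∈ (range (Lhid + 1)).erase r, s ℓ) * ‖V - W r‖) := by
      gcongr
      exact norm_logitsW_update_sub_le V (W r) hφ0 hφ_lip hx hW
    _ = _ := by ring

/-- For a depth-`L = Lhid + 1` network with `|φ'| ≤ β_φ`, `|φ(u)| ≤ β_φ|u|`,
`‖x‖₂ ≤ M_x` and spectral norms `‖W^(ℓ)‖₂ ≤ s_ℓ`, the gradient of the map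
`W^(r) ↦ −log(softmax(f_θ(x))_y)` (all other weights fixed) has norm at most
`√2 · M_x · β_φ^{L−1} · Π_{ℓ≠r} s_ℓ`. -/
theorem layer_gradient_bound (φ : ℝ → ℝ) (dims : ℕ → ℕ) (Lhid : ℕ)
    (W : ∀ ℓ : ℕ, EuclideanSpace ℝ (Fin (dims (ℓ + 1)) × Fin (dims ℓ)))
    (x : EuclideanSpace ℝ (Fin (dims 0))) (y : Fin (dims (Lhid + 1)))
    (βφ Mx : ℝ) (s : ℕ → ℝ)
    (hφ : Differentiable ℝ φ)
    (hφ' : ∀ u : ℝ, |deriv φ u| ≤ βφ)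
    (hφ0 : ∀ u : ℝ, |φ u| ≤ βφ * |u|)
    (hx : ‖x‖ ≤ Mx)
    (hW : ∀ ℓ ≤ Lhid, specNorm (W ℓ) ≤ s ℓ)
    (r : ℕ) (hr : r ≤ Lhid) :
    ‖gradient
        (fun V : EuclideanSpace ℝ (Fin (dims (r + 1)) × Fin (dims r)) =>
          crossEntropy (logitsW φ dims Lhid (Function.update W r V) x) y) (W r)‖
      ≤ Real.sqrt 2 * Mx * βφ ^ (Lhid + 1 - 1)
          * ∏ ℓ ∈ (Finset.range (Lhid + 1)).erase r, s ℓ :=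
  layer_gradient_bound_general φ dims Lhid W x y βφ Mx s hφ hφ' hφ0 hx hW r

end
end
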